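/- For the φ⁶ model with W(φ) = φ²(φ² − 1)², the transformed potential satisfies V(φ) = 6φ⁴ + 2 on (0, 1), hence V'(φ) = 24φ³ ≥ 0 on (0,1), V' is not identically zero, and the repulsivity condition (φ − 1)·V'(φ) ≤ 0 holds for all φ ∈ (0, 1). -/

import Mathlib

open Real Set

/-!
Writing `W = g ^ 2` with `g φ = φ ^ 3 - φ`, one has `W' = 2 g g'` and `W'' = 2 g' ^ 2 + 2 g g''`, so
wherever `g ≠ 0` the transformed potential is `V = 2 g' ^ 2 - 2 g g''`, which for the φ⁶ model is the
polynomial `6 φ ^ 4 + 2`. Since `g` has no zero in `(0, 1)`, `V' = 24 φ ^ 3` there, which is positive.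
-/

noncomputable def transformedPotential (W : ℝ → ℝ) (φ : ℝ) : ℝ :=
  deriv W φ ^ 2 / W φ - iteratedDeriv 2 W φ

theorem deriv_sq_eq {g : ℝ → ℝ} (hg : Differentiable ℝ g) :
    deriv (fun y => g y ^ 2) = fun y => 2 * g y * deriv g y := by
  funext y
  simpa using ((hg y).hasDerivAt.fun_pow 2).deriv

theorem transformedPotential_sq {g : ℝ → ℝ} (hg : ContDiff ℝ 2 g) {x : ℝ} (hx : g x ≠ 0) :
    transformedPotential (fun y => g y ^ 2) x =
      2 * deriv g x ^ 2 - 2 * g x * iteratedDeriv 2 g x := by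
  have hg1 : Differentiable ℝ g := hg.differentiable (by norm_num)
  have hg2 : Differentiable ℝ (deriv g) :=
    (hg.iterate_deriv' 1 1).differentiable (by norm_num)
  have h2 : iteratedDeriv 2 (fun y => g y ^ 2) x =
      2 * deriv g x ^ 2 + 2 * g x * iteratedDeriv 2 g x := by
    rw [iteratedDeriv_succ, iteratedDeriv_one, deriv_sq_eq hg1, iteratedDeriv_succ,
      iteratedDeriv_one, (((hg1 x).hasDerivAt.const_mul 2).fun_mul (hg2 x).hasDerivAt).deriv]
    ring
  rw [transformedPotential, deriv_sq_eq hg1, h2]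
  field_simp
  ring

theorem deriv_cube_sub : deriv (fun y : ℝ => y ^ 3 - y) = fun y => 3 * y ^ 2 - 1 := by
  funext y
  simp

theorem iteratedDeriv_two_cube_sub (x : ℝ) :
    iteratedDeriv 2 (fun y : ℝ => y ^ 3 - y) x = 6 * x := by
  rw [iteratedDeriv_succ, iteratedDeriv_one, deriv_cube_sub]
  norm_num [← mul_assoc]

theorem transformedPotential_phi6 {x : ℝ} (hx : x ^ 3 - x ≠ 0) :
    transformedPotential (fun φ => φ ^ 2 * (φ ^ 2 - 1) ^ 2) x = 6 * x ^ 4 + 2 := by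
  have hW : (fun φ : ℝ => φ ^ 2 * (φ ^ 2 - 1) ^ 2) = fun φ => (φ ^ 3 - φ) ^ 2 := by
    funext φ; ring
  rw [hW, transformedPotential_sq (g := fun y => y ^ 3 - y) (by fun_prop) hx,
    deriv_cube_sub, iteratedDeriv_two_cube_sub]
  ring

theorem deriv_transformedPotential_phi6 {x : ℝ} (hx : x ^ 3 - x ≠ 0) :
    deriv (transformedPotential (fun φ => φ ^ 2 * (φ ^ 2 - 1) ^ 2)) x = 24 * x ^ 3 := by
  have hopen : IsOpen {y : ℝ | y ^ 3 - y ≠ 0} := isOpen_ne_fun (by fun_prop) (by fun_prop)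
  have heq : transformedPotential (fun φ => φ ^ 2 * (φ ^ 2 - 1) ^ 2) =ᶠ[nhds x]
      fun y => 6 * y ^ 4 + 2 :=
    Filter.eventually_of_mem (hopen.mem_nhds hx) fun y hy => transformedPotential_phi6 hy
  rw [heq.deriv_eq]
  norm_num [← mul_assoc]

theorem phi6_repulsivity :
    let W : ℝ → ℝ := fun φ => φ ^ 2 * (φ ^ 2 - 1) ^ 2
    let V : ℝ → ℝ := fun φ => (deriv W φ) ^ 2 / W φ - iteratedDeriv 2 W φ
    (∀ φ ∈ Ioo (0 : ℝ) 1, V φ = 6 * φ ^ 4 + 2) ∧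
    (∀ φ ∈ Ioo (0 : ℝ) 1, deriv V φ = 24 * φ ^ 3) ∧
    (∀ φ ∈ Ioo (0 : ℝ) 1, 0 ≤ deriv V φ) ∧
    (∃ φ ∈ Ioo (0 : ℝ) 1, deriv V φ ≠ 0) ∧
    (∀ φ ∈ Ioo (0 : ℝ) 1, (φ - 1) * deriv V φ ≤ 0) := by
  intro W V
  have hW : ∀ φ ∈ Ioo (0 : ℝ) 1, φ ^ 3 - φ ≠ 0 := fun φ ⟨h0, h1⟩ =>
    (by nlinarith [mul_pos (mul_pos h0 (sub_pos.2 h1)) (by linarith : (0 : ℝ) < 1 + φ)] :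
      φ ^ 3 - φ < 0).ne
  have hV : ∀ φ ∈ Ioo (0 : ℝ) 1, deriv V φ = 24 * φ ^ 3 := fun φ hφ =>
    deriv_transformedPotential_phi6 (hW φ hφ)
  refine ⟨fun φ hφ => transformedPotential_phi6 (hW φ hφ), hV, ?_, ?_, ?_⟩
  · intro φ hφ
    rw [hV φ hφ]
    have := hφ.1
    positivity
  · exact ⟨1 / 2, by norm_num, by rw [hV _ (by norm_num)]; norm_num⟩
  · intro φ hφ
    rw [hV φ hφ]
    exact mul_nonpos_of_nonpos_of_nonneg (by linarith [hφ.2]) (by have := hφ.1; positivity)
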